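/- arXiv:1008.4203 — 3 statements merged into one kernel-verified Lean document; each statement's English description precedes it below -/
import Mathlib

section
/- (Theorem 2, result R1.) Let α ∈ (0,1), let z satisfy P(−z ≤ Z ≤ z) = 1−α for Z ~ N(0,1), let q > 0 and 0 < L < ∞. Suppose b : ℝ → ℝ is continuous and strictly increasing with uniformly continuous inverse, and that e(x) := b(x) − x − z satisfies e(x) = 0 for all |x| ≥ q and |e(x) − e(y)| ≤ L|x − y| for all x, y. For each n ≥ 2 and ψ ∈ ℝ, let X ~ N(ψ,1) and let R_n be a positive random variable independent of X with (n−1)R_n² having a chi-squared distribution with n−1 degrees of freedom (the joint distribution of (X, R_n) being that of (√n Ȳ_n/σ, Σ̂_n/σ) from n i.i.d. N(θ,σ²) observations with ψ = √n θ/σ). Define C* = [−b(−X), b(X)] and D*_n = [−R_n b(−X/R_n), R_n b(X/R_n)]. Then sup_{ψ∈ℝ} |P_ψ(ψ ∈ C*) − P_ψ(ψ ∈ D*_n)| → 0 as n → ∞. -/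
open MeasureTheory ProbabilityTheory Real Filter

/-- The chi-squared distribution with `k` degrees of freedom. -/
noncomputable def chiSq (k : ℕ) : Measure ℝ := gammaMeasure ((k : ℝ) / 2) (1 / 2)

/-- The law of `R n = Σ̂ n / σ`, i.e. of `√(W/(n-1))` with `W ~ χ²_{n-1}`. -/
noncomputable def chiR (n : ℕ) : Measure ℝ :=
  (chiSq (n - 1)).map fun w => Real.sqrt (w / (n - 1))

/-!
Conditionally on `R_n = R > 0`, the event `ψ ∈ D*_n` is `X ∈ [R b⁻¹(ψ/R), -R b⁻¹(-ψ/R)]`, and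
`ψ ∈ C*` is the case `R = 1`. Since `b⁻¹ u = u - z - e(b⁻¹ u)` with `e ∘ b⁻¹` uniformly continuous
and compactly supported, these endpoints converge to those at `R = 1` uniformly in `ψ` as `R → 1`,
and as the `N(ψ, 1)` density is at most `1/2`, so do the conditional coverage probabilities.
Finally `R_n → 1` in probability, by Chebyshev's inequality for `χ²_{n-1}` (variance `2(n-1)`).
-/

open Set Topology Function
open scoped symmDiff

lemma Set.Icc_symmDiff_Icc_subset {α : Type*} [LinearOrder α] (a b c d : α) :
    Icc a b ∆ Icc c d ⊆ uIcc a c ∪ uIcc b d := by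
  intro x hx
  simp only [mem_symmDiff, mem_Icc, mem_union, mem_uIcc, not_and_or, not_le] at hx ⊢
  grind

lemma gaussianPDFReal_le_inv_sqrt (μ : ℝ) (v : NNReal) (x : ℝ) :
    gaussianPDFReal μ v x ≤ (√(2 * π * v))⁻¹ := by
  rw [gaussianPDFReal_def]
  refine mul_le_of_le_one_right (by positivity) (exp_le_one_iff.2 ?_)
  exact div_nonpos_of_nonpos_of_nonneg (neg_nonpos.2 (sq_nonneg _)) (by positivity)

lemma gaussianReal_one_le_smul_volume (ψ : ℝ) (s : Set ℝ) :
    gaussianReal ψ 1 s ≤ ENNReal.ofReal (1 / 2) * volume s := by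
  have h2π : (2 : ℝ) ≤ √(2 * π * (1 : NNReal)) := by
    rw [NNReal.coe_one, mul_one, Real.le_sqrt zero_le_two (by positivity)]
    nlinarith [pi_gt_three]
  rw [gaussianReal_apply ψ one_ne_zero, ← setLIntegral_const]
  refine lintegral_mono fun x => ENNReal.ofReal_le_ofReal ?_
  calc gaussianPDFReal ψ 1 x ≤ (√(2 * π * (1 : NNReal)))⁻¹ := gaussianPDFReal_le_inv_sqrt ψ 1 x
    _ ≤ 1 / 2 := by rw [one_div]; exact inv_anti₀ two_pos h2π

lemma gaussianReal_one_real_uIcc_le (ψ a c : ℝ) :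
    (gaussianReal ψ 1).real (uIcc a c) ≤ |a - c| / 2 := by
  have h := gaussianReal_one_le_smul_volume ψ (uIcc a c)
  rw [Real.volume_interval, ← ENNReal.ofReal_mul (by norm_num), abs_sub_comm] at h
  simpa [measureReal_def, div_eq_inv_mul] using ENNReal.toReal_le_of_le_ofReal (by positivity) h

lemma abs_gaussianReal_one_real_Icc_sub_le (ψ a b c d : ℝ) :
    |(gaussianReal ψ 1).real (Icc a b) - (gaussianReal ψ 1).real (Icc c d)|
      ≤ (|a - c| + |b - d|) / 2 := by
  calc _ ≤ (gaussianReal ψ 1).real (Icc a b ∆ Icc c d) :=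
        abs_measureReal_sub_le_measureReal_symmDiff
          measurableSet_Icc.nullMeasurableSet measurableSet_Icc.nullMeasurableSet
    _ ≤ (gaussianReal ψ 1).real (uIcc a c ∪ uIcc b d) :=
        measureReal_mono (Icc_symmDiff_Icc_subset a b c d)
    _ ≤ (gaussianReal ψ 1).real (uIcc a c) + (gaussianReal ψ 1).real (uIcc b d) :=
        measureReal_union_le _ _
    _ ≤ |a - c| / 2 + |b - d| / 2 :=
        add_le_add (gaussianReal_one_real_uIcc_le ψ a c) (gaussianReal_one_real_uIcc_le ψ b d)
    _ = (|a - c| + |b - d|) / 2 := by ring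

lemma mul_gammaPDFReal {a r : ℝ} (ha : 0 < a) (hr : 0 < r) (w : ℝ) :
    w * gammaPDFReal a r w = a / r * gammaPDFReal (a + 1) r w := by
  unfold gammaPDFReal
  split_ifs with hw
  · have hwa : w * w ^ (a - 1) = w ^ (a + 1 - 1) := by
      rw [add_sub_cancel_right]
      rcases hw.eq_or_lt with rfl | hw
      · simp [zero_rpow ha.ne']
      · rw [← rpow_one_add' hw.le (by linarith)]; ring_nf
    rw [Gamma_add_one ha.ne', rpow_add_one hr.ne', ← hwa]
    field_simp [(Gamma_pos_of_pos ha).ne']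
  · simp

lemma lintegral_ofReal_mul_gammaPDFReal {a r c : ℝ} (ha : 0 < a) (hr : 0 < r) (hc : 0 ≤ c) :
    ∫⁻ w, ENNReal.ofReal (c * gammaPDFReal a r w) = ENNReal.ofReal c := by
  simp_rw [ENNReal.ofReal_mul hc]
  rw [lintegral_const_mul _ (measurable_gammaPDFReal a r).ennreal_ofReal,
    show (fun w => ENNReal.ofReal (gammaPDFReal a r w)) = gammaPDF a r from rfl,
    lintegral_gammaPDF_eq_one ha hr, mul_one]

lemma lintegral_sq_sub_gammaMeasure {a r : ℝ} (ha : 0 < a) (hr : 0 < r) :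
    ∫⁻ w, ENNReal.ofReal ((w - a / r) ^ 2) ∂gammaMeasure a r = ENNReal.ofReal (a / r ^ 2) := by
  set m := a / r
  -- `(w - m)² * gammaPDFReal a r w`, expanded by `mul_gammaPDFReal` into Gamma densities with all
  -- coefficients nonnegative, so that the computation needs no subtraction in `ℝ≥0∞`
  have hexpand (w : ℝ) : (w - m) ^ 2 * gammaPDFReal a r w + 2 * m ^ 2 * gammaPDFReal (a + 1) r w
      = m * ((a + 1) / r) * gammaPDFReal (a + 2) r w + m ^ 2 * gammaPDFReal a r w := by
    have h1 := mul_gammaPDFReal ha hr w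
    have h2 := mul_gammaPDFReal (by linarith : 0 < a + 1) hr w
    rw [add_assoc, one_add_one_eq_two] at h2
    linear_combination (w - 2 * m) * h1 + m * h2
  have hpdf (b : ℝ) (hb : 0 < b) (w : ℝ) := gammaPDFReal_nonneg hb hr w
  have hdensity : ∫⁻ w, ENNReal.ofReal ((w - m) ^ 2) ∂gammaMeasure a r
      = ∫⁻ w, ENNReal.ofReal ((w - m) ^ 2 * gammaPDFReal a r w) := by
    rw [gammaMeasure, lintegral_withDensity_eq_lintegral_mul _ (f := gammaPDF a r)
      (measurable_gammaPDFReal a r).ennreal_ofReal (by fun_prop)]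
    refine lintegral_congr fun w => ?_
    rw [Pi.mul_apply, gammaPDF, ← ENNReal.ofReal_mul (hpdf a ha w), mul_comm]
  refine (ENNReal.add_left_inj (a := ENNReal.ofReal (2 * m ^ 2)) ENNReal.ofReal_ne_top).1 ?_
  calc ∫⁻ w, ENNReal.ofReal ((w - m) ^ 2) ∂gammaMeasure a r + ENNReal.ofReal (2 * m ^ 2)
      = ∫⁻ w, (ENNReal.ofReal ((w - m) ^ 2 * gammaPDFReal a r w)
          + ENNReal.ofReal (2 * m ^ 2 * gammaPDFReal (a + 1) r w)) := by
        rw [hdensity, lintegral_add_left (by fun_prop),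
          lintegral_ofReal_mul_gammaPDFReal (by linarith) hr (by positivity)]
    _ = ∫⁻ w, (ENNReal.ofReal (m * ((a + 1) / r) * gammaPDFReal (a + 2) r w)
          + ENNReal.ofReal (m ^ 2 * gammaPDFReal a r w)) := by
        refine lintegral_congr fun w => ?_
        have := hpdf a ha w
        have := hpdf (a + 1) (by linarith) w
        have := hpdf (a + 2) (by linarith) w
        rw [← ENNReal.ofReal_add (by positivity) (by positivity),
          ← ENNReal.ofReal_add (by positivity) (by positivity), hexpand]
    _ = ENNReal.ofReal (a / r ^ 2) + ENNReal.ofReal (2 * m ^ 2) := by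
        rw [lintegral_add_left (by fun_prop),
          lintegral_ofReal_mul_gammaPDFReal (by linarith) hr (by positivity),
          lintegral_ofReal_mul_gammaPDFReal ha hr (by positivity),
          ← ENNReal.ofReal_add (by positivity) (by positivity),
          ← ENNReal.ofReal_add (by positivity) (by positivity)]
        congr 1
        simp only [m]
        field_simp
        ring

lemma gammaMeasure_le_abs_sub {a r c : ℝ} (ha : 0 < a) (hr : 0 < r) (hc : 0 < c) :
    gammaMeasure a r {w | c ≤ |w - a / r|} ≤ ENNReal.ofReal (a / r ^ 2 / c ^ 2) := by
  calc gammaMeasure a r {w | c ≤ |w - a / r|}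
      ≤ gammaMeasure a r {w | ENNReal.ofReal (c ^ 2) ≤ ENNReal.ofReal ((w - a / r) ^ 2)} := by
        refine measure_mono fun w hw => ENNReal.ofReal_le_ofReal ?_
        simpa only [sq_abs] using pow_le_pow_left₀ hc.le hw 2
    _ ≤ (∫⁻ w, ENNReal.ofReal ((w - a / r) ^ 2) ∂gammaMeasure a r) / ENNReal.ofReal (c ^ 2) :=
        meas_ge_le_lintegral_div (by fun_prop) (by simp [hc.ne']) ENNReal.ofReal_ne_top
    _ = ENNReal.ofReal (a / r ^ 2 / c ^ 2) := by
        rw [lintegral_sq_sub_gammaMeasure ha hr, ← ENNReal.ofReal_div_of_pos (by positivity)]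

lemma chiSq_le_abs_sub {k : ℕ} (hk : 0 < k) {c : ℝ} (hc : 0 < c) :
    chiSq k {w | c ≤ |w - k|} ≤ ENNReal.ofReal (2 * k / c ^ 2) := by
  have h := gammaMeasure_le_abs_sub (a := k / 2) (r := 1 / 2) (by positivity) one_half_pos hc
  rw [show (k : ℝ) / 2 / (1 / 2) = k by ring] at h
  rw [chiSq]
  convert h using 2
  ring

lemma abs_sqrt_sub_one_le (u : ℝ) : |√u - 1| ≤ |u - 1| := by
  rcases le_or_gt u 0 with hu | hu
  · rw [sqrt_eq_zero'.2 hu, abs_of_nonpos (by linarith), abs_of_neg (by linarith)]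
    linarith
  · have hs : 0 ≤ √u := sqrt_nonneg u
    calc |√u - 1| ≤ |√u - 1| * (√u + 1) := le_mul_of_one_le_right (abs_nonneg _) (by linarith)
      _ = |u - 1| := by
        rw [← abs_of_nonneg (by linarith : 0 ≤ √u + 1), ← abs_mul, mul_add_one, sub_mul,
          mul_self_sqrt hu.le]
        ring_nf

lemma chiR_succ_le_abs_sub_one {k : ℕ} (hk : 0 < k) {δ : ℝ} (hδ : 0 < δ) :
    chiR (k + 1) {R | δ ≤ |R - 1|} ≤ ENNReal.ofReal (2 / δ ^ 2 / k) := by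
  have hk' : (0 : ℝ) < k := Nat.cast_pos.2 hk
  rw [chiR, Measure.map_apply (by fun_prop) (measurableSet_le (by fun_prop) (by fun_prop))]
  calc chiSq (k + 1 - 1) _ ≤ chiSq k {w | δ * k ≤ |w - k|} := by
        refine measure_mono fun w hw => ?_
        simp only [mem_preimage, mem_ofPred_eq, Nat.cast_add, Nat.cast_one, add_sub_cancel_right]
          at hw ⊢
        have := hw.trans (abs_sqrt_sub_one_le (w / k))
        rwa [div_sub_one hk'.ne', abs_div, abs_of_pos hk', le_div_iff₀ hk'] at this
    _ ≤ ENNReal.ofReal (2 * k / (δ * k) ^ 2) := chiSq_le_abs_sub hk (by positivity)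
    _ = ENNReal.ofReal (2 / δ ^ 2 / k) := by congr 1; field_simp

lemma tendsto_chiR_real_le_abs_sub_one {δ : ℝ} (hδ : 0 < δ) :
    Tendsto (fun n => (chiR n).real {R | δ ≤ |R - 1|}) atTop (𝓝 0) := by
  rw [← tendsto_add_atTop_iff_nat 1]
  refine squeeze_zero' (Eventually.of_forall fun _ => measureReal_nonneg) ?_
    (tendsto_const_div_atTop_nhds_zero_nat (2 / δ ^ 2))
  filter_upwards [eventually_gt_atTop 0] with k hk
  exact ENNReal.toReal_le_of_le_ofReal (by positivity) (chiR_succ_le_abs_sub_one hk hδ)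

lemma isProbabilityMeasure_chiR {n : ℕ} (hn : 2 ≤ n) : IsProbabilityMeasure (chiR n) := by
  have : IsProbabilityMeasure (chiSq (n - 1)) :=
    isProbabilityMeasure_gammaMeasure (div_pos (Nat.cast_pos.2 (by omega)) two_pos) one_half_pos
  exact Measure.isProbabilityMeasure_map (by fun_prop)

lemma tendstoUniformly_comp_div {f : ℝ → ℝ} (hf : UniformContinuous f) (hfs : HasCompactSupport f) :
    TendstoUniformly (fun R ψ => f (ψ / R)) f (𝓝 1) := by
  obtain ⟨M, hM0, hM⟩ := hfs.isCompact.isBounded.subset_closedBall_lt 0 0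
  have hzero (x : ℝ) (hx : M < |x|) : f x = 0 :=
    image_eq_zero_of_notMem_tsupport fun h => hx.not_ge (by simpa using hM h)
  rw [Metric.tendstoUniformly_iff]
  intro ε hε
  obtain ⟨η, hη, hfη⟩ := Metric.uniformContinuous_iff.1 hf ε hε
  have hscale : Tendsto (fun R : ℝ => 2 * M * |1 - R⁻¹|) (𝓝 1) (𝓝 0) := by
    have : ContinuousAt (fun R : ℝ => 2 * M * |1 - R⁻¹|) 1 := by fun_prop (disch := norm_num)
    simpa using this.tendsto
  filter_upwards [hscale.eventually (gt_mem_nhds hη), eventually_lt_nhds one_lt_two,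
    eventually_gt_nhds one_pos] with R hRη hR2 hR0 ψ
  by_cases hψ : |ψ| ≤ 2 * M
  · refine hfη ?_
    rw [Real.dist_eq, div_eq_mul_inv, ← mul_one_sub, abs_mul]
    exact (mul_le_mul_of_nonneg_right hψ (abs_nonneg _)).trans_lt hRη
  · have hψR : M < |ψ / R| := by
      rw [abs_div, abs_of_pos hR0, lt_div_iff₀ hR0]
      nlinarith
    rw [hzero ψ (by linarith), hzero _ hψR, dist_self]
    exact hε

lemma tendstoUniformly_mul_comp_div {b binv : ℝ → ℝ} {z : ℝ} (hb : Monotone b)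
    (hbinv : RightInverse binv b) (hbinv_uc : UniformContinuous binv)
    (he_uc : UniformContinuous fun x => b x - x - z)
    (he_supp : HasCompactSupport fun x => b x - x - z) :
    TendstoUniformly (fun R ψ => R * binv (ψ / R)) binv (𝓝 1) := by
  set E := fun u => b (binv u) - binv u - z
  have hE (u : ℝ) : binv u = u - z - E u := by simp only [E, hbinv u]; ring
  have hE_uc : UniformContinuous E := he_uc.comp hbinv_uc
  have hE_supp : HasCompactSupport E := by
    obtain ⟨M, hM⟩ := he_supp.isCompact.isBounded.subset_closedBall 0
    refine HasCompactSupport.intro (isCompact_Icc (a := b (-M)) (b := b M)) fun u hu => ?_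
    refine image_eq_zero_of_notMem_tsupport (f := fun x => b x - x - z) fun hmem => hu ?_
    have := abs_le.1 (by simpa using hM hmem)
    exact ⟨hbinv u ▸ hb this.1, hbinv u ▸ hb this.2⟩
  obtain ⟨C, hC⟩ := hE_uc.continuous.bounded_above_of_compact_support hE_supp
  rw [Metric.tendstoUniformly_iff]
  intro ε hε
  have hlin : Tendsto (fun R : ℝ => |R - 1| * (|z| + C)) (𝓝 1) (𝓝 0) := by
    have : ContinuousAt (fun R : ℝ => |R - 1| * (|z| + C)) 1 := by fun_prop
    simpa using this.tendsto
  filter_upwards [Metric.tendstoUniformly_iff.1 (tendstoUniformly_comp_div hE_uc hE_supp) _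
    (half_pos hε), hlin.eventually (gt_mem_nhds (half_pos hε)), eventually_ne_nhds one_ne_zero]
    with R hER hR hR0 ψ
  have hsplit : binv ψ - R * binv (ψ / R) = (R - 1) * (z + E (ψ / R)) + (E (ψ / R) - E ψ) := by
    rw [hE ψ, hE (ψ / R)]
    field_simp
    ring
  have hzE : |z + E (ψ / R)| ≤ |z| + C := (abs_add_le _ _).trans (by simpa using hC (ψ / R))
  rw [Real.dist_eq, hsplit]
  calc |(R - 1) * (z + E (ψ / R)) + (E (ψ / R) - E ψ)|
      ≤ |R - 1| * (|z| + C) + |E ψ - E (ψ / R)| := by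
        rw [abs_sub_comm (E _)]
        exact (abs_add_le _ _).trans
          (add_le_add_left (by rw [abs_mul]; gcongr) _)
    _ < ε / 2 + ε / 2 := add_lt_add hR (by simpa [Real.dist_eq] using hER ψ)
    _ = ε := add_halves ε

lemma setOf_scaled_coverage_eq_Icc {b binv : ℝ → ℝ} (hb : StrictMono b)
    (hbinv : RightInverse binv b) {R : ℝ} (hR : 0 < R) (ψ : ℝ) :
    {x | -(R * b (-(x / R))) ≤ ψ ∧ ψ ≤ R * b (x / R)}
      = Icc (R * binv (ψ / R)) (-(R * binv (-ψ / R))) := by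
  have hbinv_le (u t : ℝ) : binv u ≤ t ↔ u ≤ b t := by rw [← hb.le_iff_le, hbinv u]
  ext x
  have hlo : ψ ≤ R * b (x / R) ↔ R * binv (ψ / R) ≤ x := by
    rw [← div_le_iff₀' hR, ← hbinv_le, le_div_iff₀' hR]
  have hhi : -(R * b (-(x / R))) ≤ ψ ↔ x ≤ -(R * binv (-ψ / R)) := by
    rw [neg_le, ← div_le_iff₀' hR, ← hbinv_le, le_neg, div_le_iff₀' hR, mul_neg]
  rw [mem_ofPred_eq, mem_Icc, hlo, hhi, and_comm]

lemma abs_sub_integral_le {β : Type*} [MeasurableSpace β] {ν : Measure β} [IsProbabilityMeasure ν]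
    {g : β → ℝ} (hg : AEStronglyMeasurable g ν) {a ε : ℝ} (hε : 0 ≤ ε) {s : Set β}
    (hs : MeasurableSet s) (hg_one : ∀ x, |a - g x| ≤ 1) (hg_eps : ∀ x ∉ s, |a - g x| ≤ ε) :
    |a - ∫ x, g x ∂ν| ≤ ε + ν.real s := by
  have hgi : Integrable g ν := by
    refine Integrable.of_bound hg (|a| + 1) (ae_of_all _ fun x => ?_)
    have := hg_one x
    rw [Real.norm_eq_abs]
    calc |g x| = |a - (a - g x)| := by ring_nf
      _ ≤ |a| + |a - g x| := abs_sub _ _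
      _ ≤ |a| + 1 := by linarith
  have hbound (x : β) : ‖a - g x‖ ≤ ε + s.indicator (fun _ => 1) x := by
    by_cases hx : x ∈ s
    · simpa [hx] using (hg_one x).trans (le_add_of_nonneg_left hε)
    · simpa [hx] using hg_eps x hx
  calc |a - ∫ x, g x ∂ν| = ‖∫ x, (a - g x) ∂ν‖ := by
        rw [integral_sub (integrable_const a) hgi, integral_const, probReal_univ, one_smul,
          Real.norm_eq_abs]
    _ ≤ ∫ x, (ε + s.indicator (fun _ => 1) x) ∂ν :=
        norm_integral_le_of_norm_le ((integrable_const ε).add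
          ((integrable_const 1).indicator hs)) (ae_of_all _ hbound)
    _ = ε + ν.real s := by
        rw [integral_add (integrable_const ε) ((integrable_const 1).indicator hs), integral_const,
          probReal_univ, one_smul]
        exact congrArg _ (integral_indicator_one hs)

lemma Measure.prod_real_apply_symm {α β : Type*} [MeasurableSpace α] [MeasurableSpace β]
    {μ : Measure α} {ν : Measure β} [IsFiniteMeasure μ] [SFinite ν] {s : Set (α × β)}
    (hs : MeasurableSet s) :
    (μ.prod ν).real s = ∫ y, μ.real ((fun x => (x, y)) ⁻¹' s) ∂ν := by
  rw [measureReal_def, Measure.prod_apply_symm hs]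
  exact (integral_toReal (measurable_measure_prodMk_right hs).aemeasurable
    (ae_of_all _ fun _ => measure_lt_top _ _)).symm

lemma abs_coverage_sub_le {b binv : ℝ → ℝ} (hb : StrictMono b) (hbinv : RightInverse binv b)
    (ν : Measure ℝ) [IsProbabilityMeasure ν] {δ ε : ℝ} (hδ : δ ≤ 1) (hε : 0 ≤ ε)
    (hclose : ∀ R, |R - 1| < δ → ∀ φ, |binv φ - R * binv (φ / R)| ≤ ε) (ψ : ℝ) :
    |(gaussianReal ψ 1).real {x | -b (-x) ≤ ψ ∧ ψ ≤ b x} -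
        ((gaussianReal ψ 1).prod ν).real
          {p : ℝ × ℝ | -(p.2 * b (-(p.1 / p.2))) ≤ ψ ∧ ψ ≤ p.2 * b (p.1 / p.2)}|
      ≤ ε + ν.real {R | δ ≤ |R - 1|} := by
  set S := {p : ℝ × ℝ | -(p.2 * b (-(p.1 / p.2))) ≤ ψ ∧ ψ ≤ p.2 * b (p.1 / p.2)}
  have hbm : Measurable b := hb.monotone.measurable
  have hS : MeasurableSet S :=
    (measurableSet_le (f := fun p : ℝ × ℝ => -(p.2 * b (-(p.1 / p.2)))) (by fun_prop)
      measurable_const).inter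
      (measurableSet_le (g := fun p : ℝ × ℝ => p.2 * b (p.1 / p.2)) measurable_const (by fun_prop))
  have hC : {x | -b (-x) ≤ ψ ∧ ψ ≤ b x} = Icc (binv ψ) (-binv (-ψ)) := by
    simpa using setOf_scaled_coverage_eq_Icc hb hbinv one_pos ψ
  rw [Measure.prod_real_apply_symm hS, hC]
  refine abs_sub_integral_le (g := fun R => (gaussianReal ψ 1).real ((fun x => (x, R)) ⁻¹' S))
    (measurable_measure_prodMk_right hS).ennreal_toReal.aestronglyMeasurable hε
    (measurableSet_le measurable_const (by fun_prop)) (fun R => ?_) (fun R hR => ?_)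
  · exact abs_sub_le_of_nonneg_of_le measureReal_nonneg measureReal_le_one measureReal_nonneg
      measureReal_le_one
  · have hR1 : |R - 1| < δ := not_le.1 hR
    have hR0 : 0 < R := by linarith [neg_abs_le (R - 1)]
    rw [show (fun x => (x, R)) ⁻¹' S = _ from setOf_scaled_coverage_eq_Icc hb hbinv hR0 ψ]
    refine (abs_gaussianReal_one_real_Icc_sub_le ψ _ _ _ _).trans ?_
    have := hclose R hR1 ψ
    have := hclose R hR1 (-ψ)
    rw [neg_sub_neg, abs_sub_comm (R * binv (-ψ / R))]
    linarith

theorem statement5_general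
    (z : ℝ) (q : ℝ) (L : ℝ)
    (b binv : ℝ → ℝ)
    -- (A1): `b` is continuous and strictly increasing, with uniformly continuous inverse
    (hb_mono : StrictMono b)
    (hbinv_right : Function.RightInverse binv b)
    (hbinv_uc : UniformContinuous binv)
    -- (A2): `e(x) = b(x) - x - z` vanishes for `|x| ≥ q` and is `L`-Lipschitz
    (he_zero : ∀ x : ℝ, q ≤ |x| → b x - x - z = 0)
    (he_lip : ∀ x y : ℝ, |(b x - x - z) - (b y - y - z)| ≤ L * |x - y|) :
    Tendsto
      (fun n : ℕ =>
        ⨆ ψ : ℝ,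
          |(gaussianReal ψ 1 {x : ℝ | -b (-x) ≤ ψ ∧ ψ ≤ b x}).toReal -
            (((gaussianReal ψ 1).prod (chiR n))
              {p : ℝ × ℝ | -(p.2 * b (-(p.1 / p.2))) ≤ ψ ∧ ψ ≤ p.2 * b (p.1 / p.2)}).toReal|)
      atTop (nhds 0) := by
  have he_uc : UniformContinuous fun x => b x - x - z :=
    (LipschitzWith.of_dist_le' he_lip).uniformContinuous
  have he_supp : HasCompactSupport fun x => b x - x - z :=
    HasCompactSupport.intro (isCompact_closedBall 0 q) fun x hx =>
      he_zero x (by simpa using (not_le.1 (mt mem_closedBall_zero_iff.2 hx)).le)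
  have hendpoints := Metric.tendstoUniformly_iff.1
    (tendstoUniformly_mul_comp_div hb_mono.monotone hbinv_right hbinv_uc he_uc he_supp)
  refine tendsto_order.2 ⟨fun a ha => Eventually.of_forall fun n =>
    ha.trans_le (Real.iSup_nonneg fun _ => abs_nonneg _), fun ε hε => ?_⟩
  obtain ⟨δ, hδ, hclose⟩ := Metric.eventually_nhds_iff.1 (hendpoints (ε / 2) (half_pos hε))
  filter_upwards [(tendsto_chiR_real_le_abs_sub_one (lt_min hδ one_pos)).eventually
    (gt_mem_nhds (half_pos hε)), eventually_ge_atTop 2] with n hn hn2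
  have := isProbabilityMeasure_chiR hn2
  calc _ ≤ ε / 2 + (chiR n).real {R | min δ 1 ≤ |R - 1|} :=
        Real.iSup_le (abs_coverage_sub_le hb_mono hbinv_right (chiR n) (min_le_right δ 1)
          (half_pos hε).le fun R hR φ => by
            simpa [Real.dist_eq] using (hclose (lt_min_iff.1 hR).1 φ).le) (by positivity)
    _ < ε := by linarith

/-- Theorem 2, result R1.  Under assumptions (A1)–(A2) on the endpoint
function `b`, the coverage probabilities of `C* = [-b(-X), b(X)]` (with `X ~ N(ψ,1)`) and of
`D*_n = [-R_n b(-X/R_n), R_n b(X/R_n)]` (with `R_n` independent of `X` and `(n-1)R_n² ~ χ²_{n-1}`)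
differ by an amount tending to `0` uniformly in `ψ` as `n → ∞`. -/
theorem statement5
    (α : ℝ) (hα : α ∈ Set.Ioo (0 : ℝ) 1)
    (z : ℝ) (hz : gaussianReal 0 1 (Set.Icc (-z) z) = ENNReal.ofReal (1 - α))
    (q : ℝ) (hq : 0 < q) (L : ℝ) (hL : 0 < L)
    (b binv : ℝ → ℝ)
    -- (A1): `b` is continuous and strictly increasing, with uniformly continuous inverse
    (hb_cont : Continuous b) (hb_mono : StrictMono b)
    (hbinv_left : Function.LeftInverse binv b)
    (hbinv_right : Function.RightInverse binv b)
    (hbinv_uc : UniformContinuous binv)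
    -- (A2): `e(x) = b(x) - x - z` vanishes for `|x| ≥ q` and is `L`-Lipschitz
    (he_zero : ∀ x : ℝ, q ≤ |x| → b x - x - z = 0)
    (he_lip : ∀ x y : ℝ, |(b x - x - z) - (b y - y - z)| ≤ L * |x - y|) :
    Tendsto
      (fun n : ℕ =>
        ⨆ ψ : ℝ,
          |(gaussianReal ψ 1 {x : ℝ | -b (-x) ≤ ψ ∧ ψ ≤ b x}).toReal -
            (((gaussianReal ψ 1).prod (chiR n))
              {p : ℝ × ℝ | -(p.2 * b (-(p.1 / p.2))) ≤ ψ ∧ ψ ≤ p.2 * b (p.1 / p.2)}).toReal|)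
      atTop (nhds 0) :=
  statement5_general z q L b binv hb_mono hbinv_right hbinv_uc he_zero he_lip
end

section
/- Let z ∈ ℝ, q > 0, 0 < L < ∞, and let e : ℝ → ℝ satisfy e(x) = 0 for all |x| ≥ q and |e(x) − e(y)| ≤ L|x − y| for all x, y; set b(x) = x + z + e(x). Let M be a finite constant such that |(r − 1)(z + e(x/r)) + (e(x/r) − e(x))| ≤ M δ whenever δ ∈ (0, 1/2], |r − 1| ≤ δ, r > 0 and x ∈ ℝ. Let ψ ∈ ℝ, let X ~ N(ψ,1), let R be a positive random variable independent of X, and let δ ∈ (0, 1/2]. Then P(ψ > b(X) + Mδ) − P(|R − 1| > δ) ≤ P({ψ > R·b(X/R)} ∩ {|R − 1| ≤ δ}) ≤ P(ψ > b(X) − Mδ). -/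
/-! On the event `|R - 1| ≤ δ`, the identity
`R b(X/R) = b(X) + (R - 1)(z + e(X/R)) + (e(X/R) - e(X))` and the perturbation bound `M` put
`R b(X/R)` within `Mδ` of `b(X)`, and the sandwich is a comparison of events: off that event
there is nothing to control, which costs `P(|R - 1| > δ)` in the lower bound. -/

open MeasureTheory ProbabilityTheory

lemma mul_apply_div_eq_add_perturbation {z : ℝ} {e b : ℝ → ℝ} (hb : ∀ x, b x = x + z + e x)
    {r : ℝ} (hr : r ≠ 0) (x : ℝ) :
    r * b (x / r) = b x + ((r - 1) * (z + e (x / r)) + (e (x / r) - e x)) := by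
  rw [hb, hb]
  field_simp
  ring

lemma measureReal_lt_sandwich {Ω : Type*} [MeasurableSpace Ω] (μ : Measure Ω)
    [IsFiniteMeasure μ] {f g : Ω → ℝ} {G : Set Ω} {c : ℝ} (hfg : ∀ ω ∈ G, |f ω - g ω| ≤ c)
    (ψ : ℝ) :
    μ.real {ω | g ω + c < ψ} - μ.real Gᶜ ≤ μ.real ({ω | f ω < ψ} ∩ G) ∧
      μ.real ({ω | f ω < ψ} ∩ G) ≤ μ.real {ω | g ω - c < ψ} := by
  constructor
  · have hsub : {ω | g ω + c < ψ} ⊆ ({ω | f ω < ψ} ∩ G) ∪ Gᶜ := by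
      intro ω (hω : g ω + c < ψ)
      by_cases hG : ω ∈ G
      · exact Or.inl ⟨show f ω < ψ by linarith [(abs_le.mp (hfg ω hG)).2], hG⟩
      · exact Or.inr hG
    linarith [measureReal_mono (μ := μ) hsub,
      measureReal_union_le (μ := μ) ({ω | f ω < ψ} ∩ G) Gᶜ]
  · refine measureReal_mono fun ω ⟨(hf : f ω < ψ), hG⟩ => show g ω - c < ψ from ?_
    linarith [(abs_le.mp (hfg ω hG)).1]

theorem statement9_general
    (z : ℝ)
    (e : ℝ → ℝ)
    (b : ℝ → ℝ) (hb : ∀ x, b x = x + z + e x)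
    (M : ℝ)
    (hM : ∀ δ : ℝ, δ ∈ Set.Ioc (0 : ℝ) (1 / 2) → ∀ x r : ℝ, 0 < r → |r - 1| ≤ δ →
      |(r - 1) * (z + e (x / r)) + (e (x / r) - e x)| ≤ M * δ)
    (Ω : Type*) [MeasurableSpace Ω] (μ : Measure Ω) [IsProbabilityMeasure μ]
    (X R : Ω → ℝ)
    (ψ : ℝ)
    (hR_pos : ∀ ω, 0 < R ω)
    (δ : ℝ) (hδ : δ ∈ Set.Ioc (0 : ℝ) (1 / 2)) :
    (μ {ω | b (X ω) + M * δ < ψ}).toReal - (μ {ω | δ < |R ω - 1|}).toReal ≤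
      (μ ({ω | R ω * b (X ω / R ω) < ψ} ∩ {ω | |R ω - 1| ≤ δ})).toReal ∧
    (μ ({ω | R ω * b (X ω / R ω) < ψ} ∩ {ω | |R ω - 1| ≤ δ})).toReal ≤
      (μ {ω | b (X ω) - M * δ < ψ}).toReal := by
  have hclose : ∀ ω ∈ {ω | |R ω - 1| ≤ δ}, |R ω * b (X ω / R ω) - b (X ω)| ≤ M * δ := by
    intro ω hω
    rw [mul_apply_div_eq_add_perturbation hb (hR_pos ω).ne', add_sub_cancel_left]
    exact hM δ hδ (X ω) (R ω) (hR_pos ω) hω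
  have hbad : {ω | δ < |R ω - 1|} = {ω | |R ω - 1| ≤ δ}ᶜ := by
    ext
    simp
  rw [hbad]
  exact measureReal_lt_sandwich μ hclose ψ

/-- Sandwich inequality: if `b(x) = x + z + e(x)` with `e` L-Lipschitz and
vanishing outside `[-q, q]`, `M` satisfies the perturbation bound, `X ~ N(ψ,1)` and `R > 0`
is independent of `X`, then for `δ ∈ (0, 1/2]`,
`P(ψ > b(X) + Mδ) − P(|R − 1| > δ) ≤ P({ψ > R b(X/R)} ∩ {|R − 1| ≤ δ}) ≤ P(ψ > b(X) − Mδ)`. -/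
theorem statement9
    (z : ℝ) (q : ℝ) (hq : 0 < q) (L : ℝ) (hL : 0 < L)
    (e : ℝ → ℝ)
    (he_zero : ∀ x : ℝ, q ≤ |x| → e x = 0)
    (he_lip : ∀ x y : ℝ, |e x - e y| ≤ L * |x - y|)
    (b : ℝ → ℝ) (hb : ∀ x, b x = x + z + e x)
    (M : ℝ)
    (hM : ∀ δ : ℝ, δ ∈ Set.Ioc (0 : ℝ) (1 / 2) → ∀ x r : ℝ, 0 < r → |r - 1| ≤ δ →
      |(r - 1) * (z + e (x / r)) + (e (x / r) - e x)| ≤ M * δ)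
    (Ω : Type*) [MeasurableSpace Ω] (μ : Measure Ω) [IsProbabilityMeasure μ]
    (X R : Ω → ℝ) (hX_meas : Measurable X) (hR_meas : Measurable R)
    (ψ : ℝ) (hX_law : μ.map X = gaussianReal ψ 1)
    (hR_pos : ∀ ω, 0 < R ω)
    (h_indep : IndepFun X R μ)
    (δ : ℝ) (hδ : δ ∈ Set.Ioc (0 : ℝ) (1 / 2)) :
    (μ {ω | b (X ω) + M * δ < ψ}).toReal - (μ {ω | δ < |R ω - 1|}).toReal ≤
      (μ ({ω | R ω * b (X ω / R ω) < ψ} ∩ {ω | |R ω - 1| ≤ δ})).toReal ∧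
    (μ ({ω | R ω * b (X ω / R ω) < ψ} ∩ {ω | |R ω - 1| ≤ δ})).toReal ≤
      (μ {ω | b (X ω) - M * δ < ψ}).toReal :=
  statement9_general z e b hb M hM Ω μ X R ψ hR_pos δ hδ
end

section
/- Let z ∈ ℝ, q > 0, and let e : ℝ → ℝ be measurable and bounded with e(x) = 0 for all |x| ≥ q; set b(x) = x + z + e(x). For X ~ N(ψ,1), E_ψ[b(X) + b(−X)] → 2z as |ψ| → ∞. Consequently, the relative efficiency e(ψ) = (E_ψ(length of C*)/(2z))² of the interval C* = [−b(−X), b(X)] tends to 1 as |ψ| → ∞, where z > 0 is the quantile satisfying P(−z ≤ Z ≤ z) = 1 − α for Z ~ N(0,1). -/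
open MeasureTheory ProbabilityTheory Filter Topology

/-!
Since `b x + b (-x) = 2 z + e x + e (-x)`, only the expectation of the bounded remainder
`h x = e x + e (-x)` has to vanish. As `N(ψ, 1)` is `N(0, 1)` shifted by `ψ`, that expectation is
`∫ h (x + ψ) dN(0, 1)`, and `h (x + ψ) → 0` as `|ψ| → ∞` for each fixed `x`, so dominated
convergence applies.
-/

theorem tendsto_integral_comp_add_cocompact {μ : Measure ℝ} [IsProbabilityMeasure μ]
    {f : ℝ → ℝ} {L C : ℝ} (hf : Measurable f) (hC : ∀ x, |f x| ≤ C)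
    (hlim : Tendsto f (cocompact ℝ) (𝓝 L)) :
    Tendsto (fun ψ => ∫ x, f (x + ψ) ∂μ) (cocompact ℝ) (𝓝 L) := by
  have : (cocompact ℝ).IsCountablyGenerated := by
    rw [cocompact_eq_atBot_atTop]; infer_instance
  have hshift (x : ℝ) : Tendsto (fun ψ => f (x + ψ)) (cocompact ℝ) (𝓝 L) :=
    hlim.comp (Homeomorph.addLeft x).map_cocompact.le
  have hL : ∫ _, L ∂μ = L := by simp
  rw [← hL]
  exact tendsto_integral_filter_of_dominated_convergence (fun _ => C)
    (.of_forall fun ψ => (hf.comp (measurable_add_const ψ)).aestronglyMeasurable)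
    (.of_forall fun ψ => ae_of_all _ fun x => hC (x + ψ)) (integrable_const C)
    (ae_of_all _ hshift)

theorem tendsto_integral_gaussianReal_cocompact {f : ℝ → ℝ} {L C : ℝ} (hf : Measurable f)
    (hC : ∀ x, |f x| ≤ C) (hlim : Tendsto f (cocompact ℝ) (𝓝 L)) (v : NNReal) :
    Tendsto (fun ψ => ∫ x, f x ∂gaussianReal ψ v) (cocompact ℝ) (𝓝 L) := by
  have hmap (ψ : ℝ) : ∫ x, f x ∂gaussianReal ψ v = ∫ x, f (x + ψ) ∂gaussianReal 0 v := by
    rw [← zero_add ψ, ← gaussianReal_map_add_const,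
      integral_map (measurable_add_const ψ).aemeasurable hf.aestronglyMeasurable, zero_add]
  simpa only [hmap] using tendsto_integral_comp_add_cocompact hf hC hlim

theorem tendsto_cocompact_of_eq_zero_of_le_abs {f : ℝ → ℝ} {q : ℝ}
    (hf : ∀ x, q ≤ |x| → f x = 0) : Tendsto f (cocompact ℝ) (𝓝 0) :=
  tendsto_const_nhds.congr' <| (tendsto_norm_cocompact_atTop.eventually_ge_atTop q).mono
    fun x hx => (hf x hx).symm

theorem statement17_general
    (z : ℝ) (hz_pos : 0 < z)
    (q : ℝ)
    (e : ℝ → ℝ) (he_meas : Measurable e)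
    (he_bdd : ∃ C : ℝ, ∀ x, |e x| ≤ C)
    (he_zero : ∀ x : ℝ, q ≤ |x| → e x = 0)
    (b : ℝ → ℝ) (hb : ∀ x, b x = x + z + e x) :
    Tendsto (fun ψ : ℝ => ∫ x, (b x + b (-x)) ∂gaussianReal ψ 1)
        (cocompact ℝ) (nhds (2 * z)) ∧
      Tendsto (fun ψ : ℝ => ((∫ x, (b x + b (-x)) ∂gaussianReal ψ 1) / (2 * z)) ^ 2)
        (cocompact ℝ) (nhds 1) := by
  obtain ⟨C, hC⟩ := he_bdd
  set h : ℝ → ℝ := fun x => e x + e (-x)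
  have h_meas : Measurable h := he_meas.add (he_meas.comp measurable_neg)
  have h_bdd (x : ℝ) : |h x| ≤ C + C := (abs_add_le _ _).trans (add_le_add (hC x) (hC (-x)))
  have h_zero (x : ℝ) (hx : q ≤ |x|) : h x = 0 := by
    simp [h, he_zero x hx, he_zero (-x) (by rwa [abs_neg])]
  have hlen (ψ : ℝ) :
      ∫ x, (b x + b (-x)) ∂gaussianReal ψ 1 = 2 * z + ∫ x, h x ∂gaussianReal ψ 1 := by
    have h_int : Integrable h (gaussianReal ψ 1) :=
      .of_bound h_meas.aestronglyMeasurable _ (ae_of_all _ h_bdd)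
    simp_rw [hb, show ∀ x, x + z + e x + (-x + z + e (-x)) = 2 * z + h x from fun x => by ring]
    rw [integral_add (integrable_const _) h_int, integral_const]
    simp
  have hlim : Tendsto (fun ψ : ℝ => ∫ x, (b x + b (-x)) ∂gaussianReal ψ 1)
      (cocompact ℝ) (𝓝 (2 * z)) := by
    simpa only [hlen, add_zero] using tendsto_const_nhds.add <|
      tendsto_integral_gaussianReal_cocompact h_meas h_bdd
        (tendsto_cocompact_of_eq_zero_of_le_abs h_zero) 1
  refine ⟨hlim, ?_⟩
  have h2z : (2 * z / (2 * z)) ^ 2 = 1 := by rw [div_self (by positivity), one_pow]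
  exact h2z ▸ (hlim.div_const (2 * z)).pow 2

/-- For `b(x) = x + z + e(x)` with `e` measurable, bounded and vanishing
outside `[-q, q]`, and `X ~ N(ψ,1)`, the expected length `E_ψ[b(X) + b(-X)]` of
`C* = [-b(-X), b(X)]` tends to `2z` as `|ψ| → ∞`; consequently the relative efficiency
`(E_ψ(length C*)/(2z))²` tends to `1` as `|ψ| → ∞`, where `z > 0` is the standard normal
quantile satisfying `P(-z ≤ Z ≤ z) = 1 - α`. -/
theorem statement17
    (α : ℝ) (hα : α ∈ Set.Ioo (0 : ℝ) 1)
    (z : ℝ) (hz_pos : 0 < z)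
    (hz : gaussianReal 0 1 (Set.Icc (-z) z) = ENNReal.ofReal (1 - α))
    (q : ℝ) (hq : 0 < q)
    (e : ℝ → ℝ) (he_meas : Measurable e)
    (he_bdd : ∃ C : ℝ, ∀ x, |e x| ≤ C)
    (he_zero : ∀ x : ℝ, q ≤ |x| → e x = 0)
    (b : ℝ → ℝ) (hb : ∀ x, b x = x + z + e x) :
    Tendsto (fun ψ : ℝ => ∫ x, (b x + b (-x)) ∂gaussianReal ψ 1)
        (cocompact ℝ) (nhds (2 * z)) ∧
      Tendsto (fun ψ : ℝ => ((∫ x, (b x + b (-x)) ∂gaussianReal ψ 1) / (2 * z)) ^ 2)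
        (cocompact ℝ) (nhds 1) :=
  statement17_general z hz_pos q e he_meas he_bdd he_zero b hb
end
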